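/- arXiv:math/0601567 — 2 statements merged into one kernel-verified Lean document; each statement's English description precedes it below -/
import Mathlib

section
/- Let V be a valuation domain of Krull dimension 2 with maximal ideal m, P the prime ideal between (0) and m, x ∈ P nonzero and y ∈ m \ P. Then the second Čech cohomology H^2_{x,y}(V) vanishes, even though the ideal (x, y)V has height 2. -/
/-- The natural map between localizations of a module at powers of two elements
`a ∣ b`, sending `m/1` to `m/1`. -/

noncomputable def cechLoc {R : Type*} [CommRing R] {M : Type*} [AddCommGroup M] [Module R M]
    (a b : R) (hab : a ∣ b) :
    LocalizedModule (Submonoid.powers a) M →ₗ[R] LocalizedModule (Submonoid.powers b) M :=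
  LocalizedModule.lift _ (LocalizedModule.mkLinearMap (Submonoid.powers b) M) (by
    rintro ⟨s, n, rfl⟩
    obtain ⟨c, rfl⟩ := hab
    set f := algebraMap R (Module.End R (LocalizedModule (Submonoid.powers (a * c)) M)) with hf
    obtain ⟨u, hu⟩ := IsLocalizedModule.map_units
      (LocalizedModule.mkLinearMap (Submonoid.powers (a * c)) M)
      (⟨(a * c) ^ n, n, rfl⟩ : Submonoid.powers (a * c))
    have hcomm : Commute (f (a ^ n)) ↑u := by
      have : Commute (f (a ^ n)) (f ((a * c) ^ n)) := by
        simp only [Commute, SemiconjBy, ← map_mul, mul_comm]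
      rwa [← hu] at this
    refine ⟨⟨f (a ^ n), f (c ^ n) * ↑u⁻¹, ?_, ?_⟩, rfl⟩
    · rw [← mul_assoc, ← map_mul, ← mul_pow, ← hu]
      exact u.mul_inv
    · rw [mul_assoc, ← (hcomm.units_inv_right).eq, ← mul_assoc, ← map_mul]
      have : c ^ n * a ^ n = (a * c) ^ n := by ring
      rw [this, ← hu]
      exact u.mul_inv)

open scoped BigOperators
open Classical

noncomputable section

variable {R : Type*} [CommRing R]

/-- Degree `i` term of the Čech complex of the sequence `x` with coefficients in `M`:
the product over `i`-element subsets `t` of the index set of the localization of `M`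
at the product of the `x j` for `j ∈ t`. -/
noncomputable abbrev CechC {ℓ : ℕ} (x : Fin ℓ → R) (M : Type*) [AddCommGroup M] [Module R M]
    (i : ℕ) : Type _ :=
  ∀ t : {t : Finset (Fin ℓ) // t.card = i}, LocalizedModule (Submonoid.powers (∏ j ∈ t.1, x j)) M

/-- The Čech differential `C^i → C^{i+1}`: the alternating sum of the further-localization
maps. -/
noncomputable def cechD {ℓ : ℕ} (x : Fin ℓ → R) (M : Type*) [AddCommGroup M] [Module R M]
    (i : ℕ) : CechC x M i →ₗ[R] CechC x M (i + 1) where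
  toFun m t := ∑ j ∈ (t.1).attach,
    ((-1 : ℤ) ^ ((t.1.filter (· < j.1)).card)) •
      cechLoc (∏ k ∈ t.1.erase j.1, x k) (∏ k ∈ t.1, x k)
        (Finset.prod_dvd_prod_of_subset _ _ _ (Finset.erase_subset _ _))
        (m ⟨t.1.erase j.1, by rw [Finset.card_erase_of_mem j.2, t.2]; omega⟩)
  map_add' := by
    intro a b
    funext t
    simp [Pi.add_apply, map_add, smul_add, Finset.sum_add_distrib]
      <;> rw [← Finset.sum_add_distrib]
      <;> refine Finset.sum_congr rfl (fun _ _ => ?_)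
      <;> first | exact smul_add _ _ _ | exact zsmul_add _ _ _ | module
  map_smul' := by
    intro r a
    funext t
    simp [Pi.smul_apply, map_smul, Finset.smul_sum, smul_comm r]

/-- The submodule of Čech coboundaries in degree `i`. -/
noncomputable def cechPrevRange {ℓ : ℕ} (x : Fin ℓ → R) (M : Type*) [AddCommGroup M]
    [Module R M] : (i : ℕ) → Submodule R (CechC x M i)
  | 0 => ⊥
  | (i + 1) => LinearMap.range (cechD x M i)

/-- The `i`-th Čech cohomology of `M` with respect to the sequence `x`:
cocycles modulo coboundaries. -/
noncomputable abbrev CechH {ℓ : ℕ} (x : Fin ℓ → R) (M : Type*) [AddCommGroup M] [Module R M]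
    (i : ℕ) : Type _ :=
  LinearMap.ker (cechD x M i) ⧸
    (cechPrevRange x M i).comap (LinearMap.ker (cechD x M i)).subtype


/-- Degree `i` term of the Koszul complex on `ℓ` elements: free module indexed by
`i`-element subsets of the index set. -/
abbrev KoszulC (R : Type*) [CommRing R] (ℓ i : ℕ) : Type _ :=
  {t : Finset (Fin ℓ) // t.card = i} → R

/-- The Koszul differential `K_{i+1} → K_i` for the sequence `x^k = x_1^k, ..., x_ℓ^k`. -/
noncomputable def koszulD {ℓ : ℕ} (x : Fin ℓ → R) (k : ℕ) (i : ℕ) :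
    KoszulC R ℓ (i + 1) →ₗ[R] KoszulC R ℓ i where
  toFun m s := ∑ j ∈ (s.1ᶜ).attach,
    ((-1 : ℤ) ^ ((s.1.filter (· < j.1)).card)) •
      ((x j.1 ^ k) * m ⟨insert j.1 s.1, by
        rw [Finset.card_insert_of_notMem (Finset.mem_compl.mp j.2), s.2]⟩)
  map_add' := by
    intro a b
    funext s
    simp [mul_add, smul_add, Finset.sum_add_distrib]
  map_smul' := by
    intro r a
    funext s
    simp [Finset.mul_sum, mul_smul_comm, mul_left_comm]
  
/-- The standard transition chain map `K(x^m) → K(x^n)` (for `n ≤ m`) in degree `i`: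
multiplication on the component indexed by `t` by `∏_{j ∈ t} x_j^{m-n}`. -/
noncomputable def koszulTr {ℓ : ℕ} (x : Fin ℓ → R) (m n i : ℕ) :
    KoszulC R ℓ i →ₗ[R] KoszulC R ℓ i where
  toFun z t := (∏ j ∈ t.1, x j ^ (m - n)) * z t
  map_add' := by intro a b; funext t; simp [mul_add]
  map_smul' := by intro r a; funext t; simp; ring

/-- A finite sequence `x` is weakly proregular if for each `n` there is `m ≥ n` such that
the transition maps `H_i(x^m; R) → H_i(x^n; R)` on Koszul homology vanish for all `i ≥ 1`;
equivalently, the transition image of every cycle is a boundary. -/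
def WeaklyProregular {ℓ : ℕ} (x : Fin ℓ → R) : Prop :=
  ∀ n : ℕ, 1 ≤ n → ∃ m, n ≤ m ∧ ∀ i : ℕ, ∀ z : KoszulC R ℓ (i + 1),
    koszulD x m i z = 0 →
      ∃ b : KoszulC R ℓ (i + 1 + 1), koszulD x n (i + 1) b = koszulTr x m n (i + 1) z

/-- The height of an ideal: the infimum of the heights of the primes containing it. -/
noncomputable def idealHeight (I : Ideal R) : ℕ∞ :=
  ⨅ p : {p : PrimeSpectrum R // I ≤ p.asIdeal}, Order.height p.1


/-- A finite sequence `x` (given as a list `l`) is a parameter sequence on `R` if it is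
weakly proregular, generates a proper ideal, and the localized top Čech cohomology
`H^{ℓ(x)}_x(R)_p` is nonzero for every prime `p` containing `(x)R`. -/
def IsParamSeq (l : List R) : Prop :=
  WeaklyProregular l.get ∧ Ideal.span {a | a ∈ l} ≠ ⊤ ∧
    ∀ p : PrimeSpectrum R, Ideal.span {a | a ∈ l} ≤ p.asIdeal →
      Nontrivial (LocalizedModule p.asIdeal.primeCompl (CechH l.get R l.length))

/-- A strong parameter sequence: every initial segment is a parameter sequence. -/
def IsStrongParamSeq (l : List R) : Prop :=
  ∀ i : ℕ, i ≤ l.length → IsParamSeq (l.take i)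

/-!
Ideals of a valuation ring are totally ordered, so `x ∈ P` and `y ∉ P` force `y ∣ x`. Then
`x * y ∣ x ^ 2`, so the localization map `V_x → V_{xy}` is onto, and already the component of
the Čech differential `C¹ → C²` coming from `V_x` hits all of `C² = V_{xy}`. For the height:
every prime containing `y` strictly contains `P ⊋ (0)`, so it has height `2` in a ring of
Krull dimension `2`.
-/

section Cech

variable {M : Type*} [AddCommGroup M] [Module R M]

theorem cechLoc_mk_eq_of_smul_eq {a b : R} (hab : a ∣ b) (m : M) (s : Submonoid.powers a)
    {z : LocalizedModule (Submonoid.powers b) M} (hz : (s : R) • z = LocalizedModule.mk m 1) :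
    cechLoc a b hab (LocalizedModule.mk m s) = z := by
  rw [cechLoc, LocalizedModule.lift_mk, LocalizedModule.mkLinearMap_apply, ← hz,
    ← Module.algebraMap_end_apply R R]
  exact Module.End.isUnit_inv_apply_apply_of_isUnit _ z

-- With `a ^ k = b * c`, the fraction `v / b ^ n` is the image of `(c ^ n • v) / a ^ (k * n)`.
theorem cechLoc_surjective_of_dvd_pow {a b : R} (hab : a ∣ b) {k : ℕ} (hk : b ∣ a ^ k) :
    Function.Surjective (cechLoc (M := M) a b hab) := by
  obtain ⟨c, hc⟩ := hk
  intro z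
  induction z using LocalizedModule.induction_on with
  | _ v s =>
    obtain ⟨n, hn⟩ := s.2
    refine ⟨LocalizedModule.mk (c ^ n • v) ⟨a ^ (k * n), k * n, rfl⟩,
      cechLoc_mk_eq_of_smul_eq hab _ _ ?_⟩
    have hpow : a ^ (k * n) • v = (s : R) • (c ^ n • v) := by
      rw [← mul_smul, ← hn, ← mul_pow, ← hc, ← pow_mul]
    rw [LocalizedModule.smul'_mk, hpow]
    exact LocalizedModule.mk_cancel s (c ^ n • v)

theorem CechH_succ_subsingleton_of_surjective {ℓ : ℕ} {x : Fin ℓ → R} {i : ℕ}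
    (h : Function.Surjective (cechD x M i)) : Subsingleton (CechH x M (i + 1)) :=
  Submodule.Quotient.subsingleton_iff.mpr (Submodule.eq_top_iff'.mpr fun u => h u.1)

theorem cechD_fin_two_one_surjective {a b : R} {k : ℕ} (h : a * b ∣ a ^ k) :
    Function.Surjective (cechD ![a, b] M 1) := by
  intro z
  have hdvd : (∏ j ∈ Finset.univ.erase 1, ![a, b] j) ∣ ∏ j, ![a, b] j :=
    Finset.prod_dvd_prod_of_subset _ _ _ (Finset.erase_subset _ _)
  have hpow : (∏ j, ![a, b] j) ∣ (∏ j ∈ Finset.univ.erase 1, ![a, b] j) ^ k := by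
    simpa [Fin.prod_univ_two, show (Finset.univ.erase 1 : Finset (Fin 2)) = {0} by decide]
      using h
  -- The component `M_a`, indexed by `univ.erase 1 = {0}`, enters `d` with sign `-1`.
  obtain ⟨w, hw⟩ := cechLoc_surjective_of_dvd_pow (M := M) hdvd hpow (-z ⟨Finset.univ, rfl⟩)
  refine ⟨Pi.single ⟨Finset.univ.erase 1, rfl⟩ w, funext fun t => ?_⟩
  obtain rfl : t = ⟨Finset.univ, rfl⟩ := Subtype.ext (Finset.eq_univ_of_card _ t.2)
  have hne : (⟨Finset.univ.erase 0, rfl⟩ : {t : Finset (Fin 2) // t.card = 1}) ≠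
      ⟨Finset.univ.erase 1, rfl⟩ := by decide
  simp [cechD, Fin.sum_univ_two, Pi.single_eq_of_ne hne, Finset.filter_eq', hw]

end Cech

theorem Order.height_eq_two_of_lt_of_lt {α : Type*} [Preorder α] (hdim : Order.krullDim α = 2)
    {a b c : α} (hab : a < b) (hbc : b < c) : Order.height c = 2 :=
  le_antisymm (WithBot.coe_le_coe.mp ((Order.height_le_krullDim c).trans_eq hdim))
    (Order.add_one_le_of_lt (Order.one_lt_height_iff.mpr ⟨b, a, hab, hbc⟩))

theorem idealHeight_eq_of_forall_height_eq {I : Ideal R} (hI : I ≠ ⊤) {n : ℕ∞}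
    (h : ∀ p : PrimeSpectrum R, I ≤ p.asIdeal → Order.height p = n) : idealHeight I = n := by
  obtain ⟨m, hm, hIm⟩ := Ideal.exists_le_maximal I hI
  exact le_antisymm (iInf_le_of_le ⟨⟨m, hm.isPrime⟩, hIm⟩ (h _ hIm).le)
    (le_iInf fun p => (h p.1 p.2).ge)

namespace ValuationRing

variable {V : Type*} [CommRing V] [PreValuationRing V]

theorem dvd_of_mem_of_notMem {I : Ideal V} {x y : V} (hx : x ∈ I) (hy : y ∉ I) : y ∣ x :=
  (dvd_total x y).resolve_left fun hxy => hy (Ideal.mem_of_dvd _ hxy hx)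

theorem lt_of_mem_of_notMem {I J : Ideal V} {y : V} (hJ : y ∈ J) (hI : y ∉ I) : I < J :=
  ((le_total I J).resolve_right fun hJI => hI (hJI hJ)).lt_of_ne fun hIJ => hI (hIJ ▸ hJ)

end ValuationRing

theorem stmt_7_general {V : Type*} [CommRing V] [IsDomain V] [ValuationRing V]
    (h2 : ringKrullDim V = 2) (P : Ideal V) [P.IsPrime] (hP0 : ⊥ < P)
    (x y : V) (hx : x ∈ P)
    (hy : y ∈ IsLocalRing.maximalIdeal V) (hyP : y ∉ P) :
    Subsingleton (CechH ![x, y] V 2) ∧ idealHeight (Ideal.span {x, y}) = 2 := by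
  obtain ⟨d, rfl⟩ := ValuationRing.dvd_of_mem_of_notMem hx hyP
  refine ⟨CechH_succ_subsingleton_of_surjective
    (cechD_fin_two_one_surjective (k := 2) ⟨d, by ring⟩), ?_⟩
  have hspan : Ideal.span {y * d, y} ≠ ⊤ := by
    refine ne_top_of_le_ne_top (IsLocalRing.maximalIdeal.isMaximal V).ne_top ?_
    rw [Ideal.span_le, Set.insert_subset_iff, Set.singleton_subset_iff]
    exact ⟨Ideal.mul_mem_right d _ hy, hy⟩
  refine idealHeight_eq_of_forall_height_eq hspan fun p hp => ?_
  have hyp : y ∈ p.asIdeal := hp (Ideal.subset_span (by simp))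
  exact Order.height_eq_two_of_lt_of_lt (a := ⊥) (b := ⟨P, ‹_›⟩) h2 hP0
    (ValuationRing.lt_of_mem_of_notMem hyp hyP)

/-- In a valuation domain `V` of Krull dimension `2` with maximal ideal `m`, prime `P`
strictly between `(0)` and `m`, `x ∈ P` nonzero and `y ∈ m \\ P`, the second Čech cohomology
`H²_{x,y}(V)` vanishes even though the ideal `(x, y)V` has height `2`. -/
theorem stmt_7 {V : Type*} [CommRing V] [IsDomain V] [ValuationRing V]
    (h2 : ringKrullDim V = 2) (P : Ideal V) [P.IsPrime] (hP0 : ⊥ < P)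
    (hPm : P < IsLocalRing.maximalIdeal V)
    (x y : V) (hx : x ∈ P) (hx0 : x ≠ 0)
    (hy : y ∈ IsLocalRing.maximalIdeal V) (hyP : y ∉ P) :
    Subsingleton (CechH ![x, y] V 2) ∧ idealHeight (Ideal.span {x, y}) = 2 :=
  stmt_7_general h2 P hP0 x y hx hy hyP

end
end

section
/- Let S = C[[x,y]] and R = C + xS. Then x is a zero-divisor on R/xyR: the element xy^2 lies in (xyR :_R x) but not in xyR, so x is a parameter on R/xyR (being weakly proregular with stabilized annihilator chain, non-nilpotent, and generating an ideal whose radical is the maximal ideal xS/xyR) that fails to be a regular element; hence R/xyR is not Cohen-Macaulay. -/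
open MvPowerSeries

/-- Membership in the subring `R = ℂ + x·ℂ[[x,y]]` of `S = ℂ[[x,y]]`. -/
def memR (f : MvPowerSeries (Fin 2) ℂ) : Prop :=
  ∃ (c : ℂ) (g : MvPowerSeries (Fin 2) ℂ), f = MvPowerSeries.C (σ := Fin 2) (R := ℂ) c + X 0 * g

/-!
The witness for `x·(xy²) ∈ xyR` is `x ∈ R`. Conversely, since `S` is a domain, `xy² = xy·a`
forces `a = y`, and `y ∉ R`: an element `c + xg` with no constant term is divisible by `x`,
whereas `y` has a nonzero coefficient at a monomial free of `x`.
-/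

theorem MvPowerSeries.X_ne_zero {σ R : Type*} [Semiring R] [Nontrivial R] (i : σ) :
    (X i : MvPowerSeries σ R) ≠ 0 := fun h => by
  classical
  simpa [coeff_X] using congrArg (coeff (Finsupp.single i 1)) h

theorem memR_X_zero_mul (g : MvPowerSeries (Fin 2) ℂ) : memR (X 0 * g) :=
  ⟨0, g, by simp⟩

theorem not_memR_X_one : ¬ memR (X 1) := by
  rintro ⟨c, g, hX⟩
  have hc : 0 = c := by simpa using congrArg constantCoeff hX
  have hdvd : (X 0 : MvPowerSeries (Fin 2) ℂ) ∣ X 1 := ⟨g, by simpa [← hc] using hX⟩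
  have hcoeff := X_dvd_iff.mp hdvd (Finsupp.single 1 1) (by simp)
  simp [coeff_X] at hcoeff

/-- In `R = ℂ + x·ℂ[[x,y]] ⊆ S = ℂ[[x,y]]`, the element `x` is a zero-divisor on `R/xyR`:
`xy² ∈ R` satisfies `x·(xy²) ∈ xyR` but `xy² ∉ xyR`.  (Hence `x` is a parameter on `R/xyR`
that is not a regular element, so `R/xyR` is not Cohen-Macaulay.) -/
theorem stmt_19 :
    memR (X 0 * (X 1) ^ 2) ∧
    (∃ a, memR a ∧ X 0 * (X 0 * (X 1) ^ 2) = X 0 * X 1 * a) ∧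
    ¬ (∃ a, memR a ∧ X 0 * (X 1) ^ 2 = X 0 * X 1 * a) := by
  refine ⟨memR_X_zero_mul _, ⟨X 0 * X 1, memR_X_zero_mul _, by ring⟩, ?_⟩
  rintro ⟨a, ha, heq⟩
  have hxy : (X 0 * X 1 : MvPowerSeries (Fin 2) ℂ) ≠ 0 := mul_ne_zero (X_ne_zero _) (X_ne_zero _)
  have ha_eq : a = X 1 := mul_left_cancel₀ hxy (by rw [← heq]; ring)
  exact not_memR_X_one (ha_eq ▸ ha)
end
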